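/- arXiv:2003.07236 — 2 statements merged into one kernel-verified Lean document; each statement's English description precedes it below -/
import Mathlib

section
/- Let L > 0 and set λ = (2π/L)⁴. Every four times continuously differentiable L-periodic mean-zero function h : ℝ → ℝ satisfies the Polyak–Łojasiewicz-type inequality φ(h) − L ≤ (1/(2λ)) ∫₀ᴸ ( (d²/dx²)[sinh(h''(x))] )² dx, where L = φ(0) is the minimum value of φ over mean-zero profiles. -/
/-!
Write `u = h''` and `P = ∫ u sinh u`. The pointwise bounds `2 (cosh y - 1) ≤ y sinh y` and
`y² ≤ y sinh y` give `φ(h) - L ≤ P / 2` and `‖u‖² ≤ P`. Integrating by parts twice,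
`P = ∫ h (sinh u)''`, so Cauchy–Schwarz and Wirtinger's inequality (for `h` and for `h'`, both
periodic with mean zero) give
`P² ≤ ‖h‖² ‖(sinh u)''‖² ≤ λ⁻¹ ‖u‖² ‖(sinh u)''‖² ≤ λ⁻¹ P ‖(sinh u)''‖²`,
that is `P ≤ λ⁻¹ ‖(sinh u)''‖²`.
-/

open Real MeasureTheory Set intervalIntegral

lemma nonneg_of_map_zero_of_hasDerivAt_nonneg {ψ ψ' : ℝ → ℝ} (hψ : ∀ x, HasDerivAt ψ (ψ' x) x)
    (hψ0 : ψ 0 = 0) (hψ' : ∀ x, 0 < x → 0 ≤ ψ' x) {y : ℝ} (hy : 0 ≤ y) : 0 ≤ ψ y := by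
  have hmono : MonotoneOn ψ (Ici 0) :=
    monotoneOn_of_hasDerivWithinAt_nonneg (convex_Ici 0)
      (fun x _ => (hψ x).continuousAt.continuousWithinAt)
      (fun x _ => (hψ x).hasDerivWithinAt)
      (fun x hx => hψ' x (by simpa using hx))
  simpa [hψ0] using hmono self_mem_Ici hy hy

lemma Real.sinh_le_mul_cosh {y : ℝ} (hy : 0 ≤ y) : sinh y ≤ y * cosh y := by
  have := nonneg_of_map_zero_of_hasDerivAt_nonneg (ψ := fun y => y * cosh y - sinh y)
    (fun x => (((hasDerivAt_id x).mul (hasDerivAt_cosh x)).sub (hasDerivAt_sinh x)))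
    (by simp) (fun x hx => by simpa using mul_nonneg hx.le (sinh_nonneg_iff.2 hx.le)) hy
  linarith

lemma Real.two_mul_cosh_sub_one_le_mul_sinh (y : ℝ) : 2 * (cosh y - 1) ≤ y * sinh y := by
  wlog hy : 0 ≤ y generalizing y
  · simpa using this (-y) (by linarith)
  have := nonneg_of_map_zero_of_hasDerivAt_nonneg (ψ := fun y => y * sinh y - 2 * (cosh y - 1))
    (fun x => ((hasDerivAt_id x).mul (hasDerivAt_sinh x)).sub
      (((hasDerivAt_cosh x).sub_const 1).const_mul 2))
    (by simp) (fun x hx => by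
      simp only [one_mul, id_eq, sub_nonneg]
      linarith [sinh_le_mul_cosh hx.le]) hy
  linarith

lemma Real.sq_le_mul_sinh (y : ℝ) : y ^ 2 ≤ y * sinh y := by
  rcases le_total 0 y with hy | hy
  · nlinarith [self_le_sinh_iff.2 hy]
  · nlinarith [sinh_le_self_iff.2 hy]

section IntegralBounds

variable {a b : ℝ} {u : ℝ → ℝ}

theorem integral_cosh_sub_le_half_integral_mul_sinh (hab : a ≤ b) (hu : Continuous u) :
    (∫ x in a..b, cosh (u x)) - (b - a) ≤ (1 / 2) * ∫ x in a..b, u x * sinh (u x) := by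
  have hcosh : Continuous fun x => cosh (u x) := continuous_cosh.comp hu
  calc (∫ x in a..b, cosh (u x)) - (b - a) = ∫ x in a..b, (cosh (u x) - 1) := by
        simp [integral_sub (hcosh.intervalIntegrable a b) intervalIntegrable_const]
    _ ≤ ∫ x in a..b, (1 / 2) * (u x * sinh (u x)) :=
        integral_mono_on hab ((hcosh.sub continuous_const).intervalIntegrable a b)
          ((continuous_const.mul (hu.mul (continuous_sinh.comp hu))).intervalIntegrable a b)
          fun x _ => by linarith [two_mul_cosh_sub_one_le_mul_sinh (u x)]
    _ = _ := intervalIntegral.integral_const_mul _ _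

theorem integral_sq_le_integral_mul_sinh (hab : a ≤ b) (hu : Continuous u) :
    ∫ x in a..b, u x ^ 2 ≤ ∫ x in a..b, u x * sinh (u x) :=
  integral_mono_on hab ((hu.pow 2).intervalIntegrable _ _)
    ((hu.mul (continuous_sinh.comp hu)).intervalIntegrable _ _) fun x _ => sq_le_mul_sinh (u x)

end IntegralBounds

theorem intervalIntegral.sq_integral_mul_le_integral_sq_mul_integral_sq {a b : ℝ} (hab : a ≤ b)
    {f g : ℝ → ℝ} (hf : Continuous f) (hg : Continuous g) :
    (∫ x in a..b, f x * g x) ^ 2 ≤ (∫ x in a..b, f x ^ 2) * ∫ x in a..b, g x ^ 2 := by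
  have hi : ∀ {φ : ℝ → ℝ}, Continuous φ → IntervalIntegrable φ volume a b :=
    fun h => h.intervalIntegrable a b
  have hquad : ∀ t : ℝ, 0 ≤ (∫ x in a..b, g x ^ 2) * (t * t)
      + 2 * (∫ x in a..b, f x * g x) * t + ∫ x in a..b, f x ^ 2 := fun t => by
    have hexp : ∫ x in a..b, (t * g x + f x) ^ 2
        = ∫ x in a..b, (t * t * g x ^ 2 + 2 * t * (f x * g x) + f x ^ 2) :=
      integral_congr fun x _ => by ring
    rw [integral_add (hi (by fun_prop)) (hi (by fun_prop)), integral_add (hi (by fun_prop))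
      (hi (by fun_prop)), integral_const_mul, integral_const_mul] at hexp
    linarith [hexp ▸ integral_nonneg hab fun x _ => sq_nonneg (t * g x + f x)]
  have := discrim_le_zero hquad
  rw [discrim] at this
  nlinarith

theorem Function.Periodic.deriv {f : ℝ → ℝ} {c : ℝ} (hf : Function.Periodic f c) :
    Function.Periodic (deriv f) c := fun x => by
  rw [← deriv_comp_add_const, show (fun y => f (y + c)) = f from funext hf]

lemma ContDiff.continuous_deriv_deriv {f : ℝ → ℝ} (hf : ContDiff ℝ 2 f) :
    Continuous (deriv (deriv f)) :=
  (hf.deriv' (n := 1)).continuous_deriv le_rfl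

theorem integral_deriv_deriv_mul_eq_of_periodic {T : ℝ} {f g : ℝ → ℝ}
    (hf : ContDiff ℝ 2 f) (hg : ContDiff ℝ 2 g) (hfT : Function.Periodic f T)
    (hgT : Function.Periodic g T) :
    ∫ x in (0 : ℝ)..T, deriv (deriv f) x * g x = ∫ x in (0 : ℝ)..T, f x * deriv (deriv g) x := by
  have hf1 : Differentiable ℝ (deriv f) := (hf.deriv' (n := 1)).differentiable one_ne_zero
  have hg1 : Differentiable ℝ (deriv g) := (hg.deriv' (n := 1)).differentiable one_ne_zero
  rw [integral_mul_deriv_eq_deriv_mul (fun x _ => (hf.differentiable two_ne_zero x).hasDerivAt)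
      (fun x _ => (hg1 x).hasDerivAt) (hf1.continuous.intervalIntegrable _ _)
      (hg.continuous_deriv_deriv.intervalIntegrable _ _),
    integral_mul_deriv_eq_deriv_mul (fun x _ => (hf1 x).hasDerivAt)
      (fun x _ => (hg.differentiable two_ne_zero x).hasDerivAt)
      (hf.continuous_deriv_deriv.intervalIntegrable _ _) (hg1.continuous.intervalIntegrable _ _)]
  simp [hfT.eq, hgT.eq, hfT.deriv.eq, hgT.deriv.eq]

theorem integral_deriv_eq_zero_of_periodic {T : ℝ} {f : ℝ → ℝ} (hf : ContDiff ℝ 1 f)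
    (hfT : Function.Periodic f T) : ∫ x in (0 : ℝ)..T, deriv f x = 0 := by
  rw [integral_deriv_eq_sub (fun x _ => hf.differentiable one_ne_zero x)
    ((hf.continuous_deriv le_rfl).intervalIntegrable _ _), hfT.eq, sub_self]

lemma ContinuousOn.memLp_restrict_Ioc {E : Type*} [NormedAddCommGroup E] {f : ℝ → E} {a b : ℝ}
    (hf : ContinuousOn f (Icc a b)) (p : ENNReal) : MemLp f p (volume.restrict (Ioc a b)) := by
  obtain ⟨C, hC⟩ := isCompact_Icc.exists_bound_of_continuousOn hf
  refine (memLp_top_of_bound ((hf.mono Ioc_subset_Icc_self).aestronglyMeasurable measurableSet_Ioc)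
    C ?_).mono_exponent le_top
  exact (ae_restrict_iff' measurableSet_Ioc).2
    (Filter.Eventually.of_forall fun x hx => hC x (Ioc_subset_Icc_self hx))

section Wirtinger

variable {a b : ℝ} {f f' : ℝ → ℂ}

lemma fourierCoeffOn_zero_eq_zero (hab : a < b) (hmean : ∫ x in a..b, f x = 0) :
    fourierCoeffOn hab f 0 = 0 := by
  simp [fourierCoeffOn_eq_integral, hmean]

lemma norm_fourierCoeffOn_of_hasDerivAt (hab : a < b) {n : ℤ} (hn : n ≠ 0)
    (hf : ∀ x ∈ uIcc a b, HasDerivAt f (f' x) x) (hf' : IntervalIntegrable f' volume a b)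
    (hfab : f a = f b) :
    ‖fourierCoeffOn hab f n‖ = (b - a) / (2 * π * |(n : ℝ)|) * ‖fourierCoeffOn hab f' n‖ := by
  rw [fourierCoeffOn_of_hasDerivAt hab hn hf hf', hfab, sub_self, mul_zero, zero_sub]
  have hba : 0 < b - a := sub_pos.2 hab
  rw [norm_mul, norm_neg, norm_mul, ← Complex.ofReal_sub, norm_div, norm_one]
  simp only [norm_mul, norm_neg, Complex.norm_real, Complex.norm_I, Complex.norm_intCast,
    Complex.norm_ofNat, norm_eq_abs, abs_of_pos pi_pos, abs_of_pos hba]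
  field_simp

lemma norm_fourierCoeffOn_le_of_hasDerivAt (hab : a < b) (n : ℤ)
    (hf : ∀ x ∈ uIcc a b, HasDerivAt f (f' x) x) (hf' : IntervalIntegrable f' volume a b)
    (hfab : f a = f b) (hmean : ∫ x in a..b, f x = 0) :
    ‖fourierCoeffOn hab f n‖ ≤ (b - a) / (2 * π) * ‖fourierCoeffOn hab f' n‖ := by
  have hba : 0 ≤ b - a := (sub_pos.2 hab).le
  rcases eq_or_ne n 0 with rfl | hn
  · rw [fourierCoeffOn_zero_eq_zero hab hmean, norm_zero]
    positivity
  · rw [norm_fourierCoeffOn_of_hasDerivAt hab hn hf hf' hfab]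
    have h1n : (1 : ℝ) ≤ |(n : ℝ)| := by exact_mod_cast Int.one_le_abs hn
    refine mul_le_mul_of_nonneg_right ?_ (norm_nonneg _)
    exact div_le_div_of_nonneg_left hba (by positivity) (le_mul_of_one_le_right (by positivity) h1n)

theorem wirtinger_inequality_complex (hab : a < b)
    (hf : ∀ x ∈ uIcc a b, HasDerivAt f (f' x) x) (hf' : MemLp f' 2 (volume.restrict (Ioc a b)))
    (hfab : f a = f b) (hmean : ∫ x in a..b, f x = 0) :
    ∫ x in a..b, ‖f x‖ ^ 2 ≤ ((b - a) / (2 * π)) ^ 2 * ∫ x in a..b, ‖f' x‖ ^ 2 := by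
  have hba : 0 < b - a := sub_pos.2 hab
  have hfc : ContinuousOn f (Icc a b) := fun x hx =>
    (hf x (Icc_subset_uIcc hx)).continuousAt.continuousWithinAt
  have hf'i : IntervalIntegrable f' volume a b :=
    (intervalIntegrable_iff_integrableOn_Ioc_of_le hab.le).2 (hf'.integrable one_le_two)
  have hcoeff : ∀ n, ‖fourierCoeffOn hab f n‖ ^ 2
      ≤ ((b - a) / (2 * π)) ^ 2 * ‖fourierCoeffOn hab f' n‖ ^ 2 := fun n => by
    rw [← mul_pow]
    exact pow_le_pow_left₀ (norm_nonneg _)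
      (norm_fourierCoeffOn_le_of_hasDerivAt hab n hf hf'i hfab hmean) 2
  have hsum := hasSum_le hcoeff (hasSum_sq_fourierCoeffOn hab (hfc.memLp_restrict_Ioc 2))
    ((hasSum_sq_fourierCoeffOn hab hf').mul_left _)
  rw [smul_eq_mul, smul_eq_mul, mul_left_comm, inv_mul_le_iff₀ hba, mul_inv_cancel_left₀ hba.ne']
    at hsum
  exact hsum

end Wirtinger

theorem wirtinger_inequality {a b : ℝ} (hab : a < b) {f f' : ℝ → ℝ}
    (hf : ∀ x ∈ uIcc a b, HasDerivAt f (f' x) x) (hf' : MemLp f' 2 (volume.restrict (Ioc a b)))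
    (hfab : f a = f b) (hmean : ∫ x in a..b, f x = 0) :
    ∫ x in a..b, f x ^ 2 ≤ ((b - a) / (2 * π)) ^ 2 * ∫ x in a..b, f' x ^ 2 := by
  have := wirtinger_inequality_complex hab (f := fun x => (f x : ℂ)) (f' := fun x => (f' x : ℂ))
    (fun x hx => (hf x hx).ofReal_comp) hf'.ofReal (by rw [hfab])
    (by rw [intervalIntegral.integral_ofReal, hmean, Complex.ofReal_zero])
  simpa only [Complex.norm_real, Real.norm_eq_abs, sq_abs] using this

theorem wirtinger_inequality_of_periodic {T : ℝ} (hT : 0 < T) {f : ℝ → ℝ}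
    (hf : ContDiff ℝ 1 f) (hfT : Function.Periodic f T) (hmean : ∫ x in (0 : ℝ)..T, f x = 0) :
    ∫ x in (0 : ℝ)..T, f x ^ 2 ≤ (T / (2 * π)) ^ 2 * ∫ x in (0 : ℝ)..T, deriv f x ^ 2 := by
  simpa using wirtinger_inequality hT
    (fun x _ => (hf.differentiable one_ne_zero x).hasDerivAt)
    ((hf.continuous_deriv le_rfl).continuousOn.memLp_restrict_Ioc 2) (by simp [hfT.eq]) hmean

theorem wirtinger_inequality_deriv_deriv_of_periodic {T : ℝ} (hT : 0 < T) {f : ℝ → ℝ}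
    (hf : ContDiff ℝ 2 f) (hfT : Function.Periodic f T) (hmean : ∫ x in (0 : ℝ)..T, f x = 0) :
    ∫ x in (0 : ℝ)..T, f x ^ 2
      ≤ ((T / (2 * π)) ^ 2) ^ 2 * ∫ x in (0 : ℝ)..T, deriv (deriv f) x ^ 2 := calc
  _ ≤ (T / (2 * π)) ^ 2 * ∫ x in (0 : ℝ)..T, deriv f x ^ 2 :=
      wirtinger_inequality_of_periodic hT (hf.of_le (by norm_num)) hfT hmean
  _ ≤ (T / (2 * π)) ^ 2 * ((T / (2 * π)) ^ 2 * ∫ x in (0 : ℝ)..T, deriv (deriv f) x ^ 2) := by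
      gcongr
      exact wirtinger_inequality_of_periodic hT (hf.deriv' (n := 1)) hfT.deriv
        (integral_deriv_eq_zero_of_periodic (hf.of_le (by norm_num)) hfT)
  _ = _ := by ring

/-- Polyak–Łojasiewicz-type inequality
φ(h) − L ≤ (1/(2λ)) ∫₀ᴸ ((sinh(h''))'')², where φ(g) = ∫₀ᴸ cosh(g''),
λ = (2π/L)⁴, and L = φ(0) is the minimum of φ over mean-zero profiles. -/
theorem polyak_lojasiewicz_inequality
    (L : ℝ) (hL : 0 < L)
    (h : ℝ → ℝ) (hh : ContDiff ℝ 4 h) (hhp : Function.Periodic h L)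
    (hhm : ∫ x in (0:ℝ)..L, h x = 0) :
    (∫ x in (0:ℝ)..L, Real.cosh (deriv (deriv h) x)) - L
      ≤ (1 / (2 * (2 * Real.pi / L) ^ 4))
          * ∫ x in (0:ℝ)..L,
              (deriv (deriv (fun y => Real.sinh (deriv (deriv h) y))) x) ^ 2 := by
  set u := deriv (deriv h)
  set w := deriv (deriv (fun y => sinh (u y)))
  set P := ∫ x in (0:ℝ)..L, u x * sinh (u x)
  set K := (L / (2 * π)) ^ 2
  have hh2 : ContDiff ℝ 2 h := hh.of_le (by norm_num)
  have hu : ContDiff ℝ 2 u := (hh.deriv' (n := 3)).deriv'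
  have hv : ContDiff ℝ 2 (fun y => sinh (u y)) := contDiff_sinh.comp hu
  have hφ : (∫ x in (0:ℝ)..L, cosh (u x)) - L ≤ (1 / 2) * P := by
    simpa using integral_cosh_sub_le_half_integral_mul_sinh hL.le hu.continuous
  have hP : P = ∫ x in (0:ℝ)..L, h x * w x :=
    integral_deriv_deriv_mul_eq_of_periodic hh2 hv hhp (hhp.deriv.deriv.comp sinh)
  have hCS : P ^ 2 ≤ (∫ x in (0:ℝ)..L, h x ^ 2) * ∫ x in (0:ℝ)..L, w x ^ 2 := hP ▸
    sq_integral_mul_le_integral_sq_mul_integral_sq hL.le hh.continuous hv.continuous_deriv_deriv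
  have hW : ∫ x in (0:ℝ)..L, h x ^ 2 ≤ K ^ 2 * P :=
    (wirtinger_inequality_deriv_deriv_of_periodic hL hh2 hhp hhm).trans
      (by gcongr; exact integral_sq_le_integral_mul_sinh hL.le hu.continuous)
  have hB : 0 ≤ ∫ x in (0:ℝ)..L, w x ^ 2 := integral_nonneg hL.le fun x _ => sq_nonneg _
  have hPB : P ≤ K ^ 2 * ∫ x in (0:ℝ)..L, w x ^ 2 := by
    nlinarith [mul_le_mul_of_nonneg_right hW hB, mul_nonneg (sq_nonneg K) hB]
  have hcoef : 1 / (2 * (2 * π / L) ^ 4) = K ^ 2 / 2 := by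
    simp only [K]
    field_simp
  rw [hcoef]
  linarith
end

section
/- Let L > 0, set λ = (2π/L)⁴, and let h be a smooth solution of the Metropolis crystal-surface PDE on t ≥ 0. Then the time derivative decays exponentially in L²: for all t ≥ 0, (∫₀ᴸ (∂ₜ h(t,x))² dx)^{1/2} ≤ e^{−λ t} (∫₀ᴸ (∂ₜ h(0,x))² dx)^{1/2}. -/
open Real MeasureTheory intervalIntegral Set
open Real

noncomputable def pd (v : ℝ × ℝ) (H : ℝ × ℝ → ℝ) (p : ℝ × ℝ) : ℝ := fderiv ℝ H p v

lemma pd_contDiff {H : ℝ × ℝ → ℝ} (hH : ContDiff ℝ (⊤ : ℕ∞) H) (v : ℝ × ℝ) :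
    ContDiff ℝ (⊤ : ℕ∞) (pd v H) :=
  (hH.fderiv_right (by simp)).clm_apply contDiff_const

lemma hasDerivAt_slice1 {H : ℝ × ℝ → ℝ} (hH : ContDiff ℝ (⊤ : ℕ∞) H) (t x : ℝ) :
    HasDerivAt (fun s => H (s, x)) (pd (1, 0) H (t, x)) t := by
  have h1 : HasDerivAt (fun s : ℝ => (s, x)) ((1 : ℝ), (0 : ℝ)) t :=
    (hasDerivAt_id t).prodMk (hasDerivAt_const t x)
  exact ((hH.differentiable (by simp) (t, x)).hasFDerivAt.comp_hasDerivAt t h1 :)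

lemma hasDerivAt_slice2 {H : ℝ × ℝ → ℝ} (hH : ContDiff ℝ (⊤ : ℕ∞) H) (t x : ℝ) :
    HasDerivAt (fun y => H (t, y)) (pd (0, 1) H (t, x)) x := by
  have h1 : HasDerivAt (fun y : ℝ => (t, y)) ((0 : ℝ), (1 : ℝ)) x :=
    (hasDerivAt_const x t).prodMk (hasDerivAt_id x)
  exact ((hH.differentiable (by simp) (t, x)).hasFDerivAt.comp_hasDerivAt x h1 :)

lemma deriv_slice1 {H : ℝ × ℝ → ℝ} (hH : ContDiff ℝ (⊤ : ℕ∞) H) (t x : ℝ) :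
    deriv (fun s => H (s, x)) t = pd (1, 0) H (t, x) := (hasDerivAt_slice1 hH t x).deriv

lemma deriv_slice2 {H : ℝ × ℝ → ℝ} (hH : ContDiff ℝ (⊤ : ℕ∞) H) (t x : ℝ) :
    deriv (fun y => H (t, y)) x = pd (0, 1) H (t, x) := (hasDerivAt_slice2 hH t x).deriv

lemma pd_pd {H : ℝ × ℝ → ℝ} (hH : ContDiff ℝ (⊤ : ℕ∞) H) (v w : ℝ × ℝ) (p : ℝ × ℝ) :
    pd v (pd w H) p = fderiv ℝ (fderiv ℝ H) p v w := by
  have hdd : ContDiff ℝ (⊤ : ℕ∞) (fderiv ℝ H) := hH.fderiv_right (by simp)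
  have A : HasFDerivAt (fun q => fderiv ℝ H q w)
      ((ContinuousLinearMap.apply ℝ ℝ w).comp (fderiv ℝ (fderiv ℝ H) p)) p :=
    (ContinuousLinearMap.apply ℝ ℝ w).hasFDerivAt.comp p (hdd.differentiable (by simp) p).hasFDerivAt
  exact congrArg (fun (l : (ℝ × ℝ) →L[ℝ] ℝ) => l v) A.fderiv

lemma pd_comm {H : ℝ × ℝ → ℝ} (hH : ContDiff ℝ (⊤ : ℕ∞) H) (v w : ℝ × ℝ) :
    pd v (pd w H) = pd w (pd v H) := by
  funext p
  rw [pd_pd hH v w p, pd_pd hH w v p]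
  have hdd : ContDiff ℝ (⊤ : ℕ∞) (fderiv ℝ H) := hH.fderiv_right (by simp)
  exact second_derivative_symmetric
    (fun y => (hH.differentiable (by simp) y).hasFDerivAt)
    ((hdd.differentiable (by simp) p).hasFDerivAt) v w

-- chain rule for sinh/cosh composition
lemma pd_sinh {H : ℝ × ℝ → ℝ} (hH : ContDiff ℝ (⊤ : ℕ∞) H) (v : ℝ × ℝ) (p : ℝ × ℝ) :
    pd v (fun q => Real.sinh (H q)) p = Real.cosh (H p) * pd v H p := by
  have A : HasFDerivAt (fun q => Real.sinh (H q))
      (Real.cosh (H p) • fderiv ℝ H p) p :=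
    (Real.hasDerivAt_sinh (H p)).comp_hasFDerivAt p (hH.differentiable (by simp) p).hasFDerivAt
  simp [pd, A.fderiv]

-- periodicity propagation
lemma pd_periodic {H : ℝ × ℝ → ℝ} (hH : ContDiff ℝ (⊤ : ℕ∞) H) {c : ℝ × ℝ}
    (hper : ∀ p, H (p + c) = H p)
    (v : ℝ × ℝ) (p : ℝ × ℝ) : pd v H (p + c) = pd v H p := by
  have A : HasFDerivAt (fun q => H (q + c)) (fderiv ℝ H (p + c)) p := by
    have := ((hH.differentiable (by simp) (p + c)).hasFDerivAt.comp p
      ((hasFDerivAt_id p).add_const c))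
    exact this
  have : fderiv ℝ H (p + c) = fderiv ℝ (fun q => H (q + c)) p := A.fderiv.symm
  rw [pd, pd, this]
  congr 1
  exact congrArg (fderiv ℝ · p) (funext hper)


lemma contDiff_deriv1 {f : ℝ → ℝ} (hf : ContDiff ℝ (⊤ : ℕ∞) f) : ContDiff ℝ (⊤ : ℕ∞) (deriv f) := by
  have h := (hf.fderiv_right (m := ((⊤ : ℕ∞) : WithTop ℕ∞)) (by simp)).clm_apply
    (contDiff_const (c := (1:ℝ)))
  have : (fun x => fderiv ℝ f x 1) = deriv f := funext fun x => fderiv_apply_one_eq_deriv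
  rwa [this] at h

lemma periodic_deriv1 {f : ℝ → ℝ} (hf : ContDiff ℝ (⊤ : ℕ∞) f) {L : ℝ}
    (hper : ∀ x, f (x + L) = f x) (x : ℝ) : deriv f (x + L) = deriv f x := by
  have : (fun y => f (y + L)) = f := funext hper
  rw [← deriv_comp_add_const f L x, this]

/-- Parseval packaged for a continuous periodic function `ℝ → ℂ`. -/
lemma parseval_periodic {L : ℝ} (hL : 0 < L) (F : ℝ → ℂ) (hF : Continuous F)
    (hper : ∀ x, F (x + L) = F x) :
    Summable (fun n : ℤ => ‖fourierCoeffOn (by linarith : (0:ℝ) < 0 + L) F n‖ ^ 2) ∧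
      ∫ x in (0:ℝ)..L, ‖F x‖ ^ 2
        = L * ∑' n : ℤ, ‖fourierCoeffOn (by linarith : (0:ℝ) < 0 + L) F n‖ ^ 2 := by
  haveI : Fact (0 < L) := ⟨hL⟩
  have hFL : F 0 = F L := by simpa using (hper 0).symm
  have gcont : Continuous (AddCircle.liftIco L 0 F) :=
    AddCircle.liftIco_zero_continuous (by simpa using hFL) hF.continuousOn
  set gc : C(AddCircle L, ℂ) := ⟨AddCircle.liftIco L 0 F, gcont⟩ with hgc
  have hcoeff : ∀ n : ℤ, fourierCoeff (⇑gc) n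
      = fourierCoeffOn (by linarith : (0:ℝ) < 0 + L) F n := by
    intro n
    exact (fourierCoeff_liftIco_eq (T := L) (a := 0) F n)
  -- values of gc on Ioc 0 L
  have hval : ∀ x ∈ Set.Ioc (0:ℝ) L, gc ((x : ℝ) : AddCircle L) = F x := by
    intro x hx
    by_cases hxL : x = L
    · have hcoe : ((x : ℝ) : AddCircle L) = ((0 : ℝ) : AddCircle L) := by
        rw [hxL]; simpa using AddCircle.coe_add_period L 0
      rw [hgc]
      simp only [ContinuousMap.coe_mk]
      rw [hcoe, AddCircle.liftIco_coe_apply (by simp [hL] : (0:ℝ) ∈ Set.Ico (0:ℝ) (0 + L))]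
      rw [hxL]; exact hFL
    · rw [hgc]
      simp only [ContinuousMap.coe_mk]
      exact AddCircle.liftIco_coe_apply
        (by simp [hx.1.le, lt_of_le_of_ne hx.2 hxL] : x ∈ Set.Ico (0:ℝ) (0 + L))
  -- Parseval on the circle
  have P := tsum_sq_fourierCoeff (ContinuousMap.toLp 2 AddCircle.haarAddCircle ℂ gc)
  have hc2 : ∀ n : ℤ, fourierCoeff (↑↑(ContinuousMap.toLp 2 AddCircle.haarAddCircle ℂ gc)) n
      = fourierCoeff (⇑gc) n := fun n => fourierCoeff_toLp gc n
  simp_rw [hc2] at P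
  have P2 : ∑' (i : ℤ), ‖fourierCoeff (⇑gc) i‖ ^ 2
      = ∫ t : AddCircle L, ‖gc t‖ ^ 2 ∂AddCircle.haarAddCircle := by
    rw [P]
    apply MeasureTheory.integral_congr_ae
    filter_upwards [ContinuousMap.coeFn_toLp (p := 2) AddCircle.haarAddCircle gc (𝕜 := ℂ)] with t ht
    rw [ht]
  clear P
  -- relate circle integral to interval integral
  have hvol : ∫ x in (0:ℝ)..L, ‖F x‖ ^ 2
      = L * ∫ t : AddCircle L, ‖gc t‖ ^ 2 ∂AddCircle.haarAddCircle := by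
    have h1 : ∫ x in (0:ℝ)..(0 + L), ‖gc ((x:ℝ) : AddCircle L)‖ ^ 2
        = ∫ t : AddCircle L, ‖gc t‖ ^ 2 ∂(volume) :=
      AddCircle.intervalIntegral_preimage L 0 (fun z => ‖gc z‖ ^ 2)
    have h2 : ∫ x in (0:ℝ)..(0 + L), ‖gc ((x:ℝ) : AddCircle L)‖ ^ 2
        = ∫ x in (0:ℝ)..L, ‖F x‖ ^ 2 := by
      rw [zero_add]
      apply intervalIntegral.integral_congr_ae
      filter_upwards with x hx
      rw [Set.uIoc_of_le hL.le] at hx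
      rw [hval x hx]
    have h3 : (volume : Measure (AddCircle L)) = ENNReal.ofReal L • AddCircle.haarAddCircle :=
      AddCircle.volume_eq_smul_haarAddCircle (T := L)
    rw [← h2, h1, h3, MeasureTheory.integral_smul_measure, ENNReal.toReal_ofReal hL.le, smul_eq_mul]
  -- summability
  have hsummable : Summable (fun n : ℤ => ‖fourierCoeffOn (by linarith : (0:ℝ) < 0 + L) F n‖ ^ 2) := by
    have hm := lp.memℓp (fourierBasis.repr (ContinuousMap.toLp 2 AddCircle.haarAddCircle ℂ gc))
    rw [memℓp_gen_iff (by norm_num : (0:ℝ) < (2 : ENNReal).toReal)] at hm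
    have : ∀ n : ℤ, fourierBasis.repr (ContinuousMap.toLp 2 AddCircle.haarAddCircle ℂ gc) n
        = fourierCoeffOn (by linarith : (0:ℝ) < 0 + L) F n := by
      intro n
      rw [fourierBasis_repr, hc2, hcoeff]
    apply Summable.congr hm
    intro n
    rw [this n]
    rw [show ((2:ENNReal).toReal) = ((2:ℕ):ℝ) by norm_num, Real.rpow_natCast]
  refine ⟨hsummable, ?_⟩
  rw [hvol, ← P2]
  congr 1
  exact tsum_congr fun n => by rw [hcoeff n]

lemma coeff_deriv_rel {L : ℝ} (hL : 0 < L) (g : ℝ → ℝ) (hg : ContDiff ℝ (⊤ : ℕ∞) g)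
    (hper : ∀ x, g (x + L) = g x) {n : ℤ} (hn : n ≠ 0) :
    fourierCoeffOn (by linarith : (0:ℝ) < 0 + L) (fun x => (g x : ℂ)) n
      = ((L:ℂ) / (2 * π * Complex.I * n)) *
        fourierCoeffOn (by linarith : (0:ℝ) < 0 + L) (fun x => ((deriv g x : ℝ) : ℂ)) n := by
  have hder : ∀ x ∈ Set.uIcc (0:ℝ) (0 + L),
      HasDerivAt (fun y => ((g y : ℝ) : ℂ)) (((deriv g x : ℝ) : ℂ)) x :=
    fun x _ => ((hg.differentiable (by simp) x).hasDerivAt).ofReal_comp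
  have hint : IntervalIntegrable (fun x => ((deriv g x : ℝ) : ℂ)) volume 0 (0 + L) :=
    (Complex.continuous_ofReal.comp (contDiff_deriv1 hg).continuous).intervalIntegrable _ _
  have h := fourierCoeffOn_of_hasDerivAt (by linarith : (0:ℝ) < 0 + L) hn hder hint
  have hg0 : g (0 + L) = g 0 := by simpa using hper 0
  rw [h, hg0]
  have hI : (2 * (π:ℂ) * Complex.I * n) ≠ 0 := by
    apply mul_ne_zero (mul_ne_zero (mul_ne_zero two_ne_zero _) Complex.I_ne_zero)
    · exact_mod_cast Int.cast_ne_zero.2 hn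
    · exact_mod_cast Complex.ofReal_ne_zero.2 Real.pi_ne_zero
  field_simp
  push_cast
  ring

lemma norm_coeff_factor {L : ℝ} (hL : 0 < L) {n : ℤ} (hn : n ≠ 0) :
    ‖(L:ℂ) / (2 * π * Complex.I * n)‖ ≤ L / (2 * π) := by
  rw [norm_div]
  have h1 : ‖(L:ℂ)‖ = L := by
    rw [Complex.norm_real]; exact abs_of_pos hL
  have h2 : ‖(2 * (π:ℂ) * Complex.I * n)‖ = 2 * π * |(n:ℝ)| := by
    simp [norm_mul, Complex.norm_I, Complex.norm_real, Complex.norm_intCast,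
      abs_of_pos Real.pi_pos, Int.cast_abs]
  rw [h1, h2]
  have hn1 : (1:ℝ) ≤ |(n:ℝ)| := by
    rw [← Int.cast_abs]
    exact_mod_cast Int.one_le_abs hn
  have h2pi : (0:ℝ) < 2 * π := by positivity
  rw [div_le_div_iff₀ (by nlinarith) h2pi]
  nlinarith [mul_le_mul_of_nonneg_left hn1 (show (0:ℝ) ≤ L * (2 * π) by positivity)]

lemma wirtinger {L : ℝ} (hL : 0 < L) (f : ℝ → ℝ) (hf : ContDiff ℝ (⊤ : ℕ∞) f)
    (hper : ∀ x, f (x + L) = f x) (hmean : ∫ x in (0:ℝ)..L, f x = 0) :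
    (2 * π / L) ^ 4 * ∫ x in (0:ℝ)..L, f x ^ 2
      ≤ ∫ x in (0:ℝ)..L, (deriv (deriv f) x) ^ 2 := by
  haveI : Fact (0 < L) := ⟨hL⟩
  have hab : (0:ℝ) < 0 + L := by linarith
  set F : ℝ → ℂ := fun x => (f x : ℂ) with hF
  set F2 : ℝ → ℂ := fun x => ((deriv (deriv f) x : ℝ) : ℂ) with hF2
  have hf1 : ContDiff ℝ (⊤ : ℕ∞) (deriv f) := contDiff_deriv1 hf
  have hf2 : ContDiff ℝ (⊤ : ℕ∞) (deriv (deriv f)) := contDiff_deriv1 hf1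
  have hperf1 : ∀ x, deriv f (x + L) = deriv f x := periodic_deriv1 hf hper
  have hperf2 : ∀ x, deriv (deriv f) (x + L) = deriv (deriv f) x := periodic_deriv1 hf1 hperf1
  -- coefficient comparison
  have hcomp : ∀ n : ℤ, (2 * π / L) ^ 4 * ‖fourierCoeffOn hab F n‖ ^ 2
      ≤ ‖fourierCoeffOn hab F2 n‖ ^ 2 := by
    intro n
    by_cases hn : n = 0
    · subst hn
      have hc0 : fourierCoeffOn hab F 0 = 0 := by
        rw [fourierCoeffOn_eq_integral]
        simp only [neg_zero, fourier_zero, one_smul]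
        have : ∫ x in (0:ℝ)..(0 + L), F x = 0 := by
          rw [zero_add, hF]
          rw [intervalIntegral.integral_ofReal, hmean, Complex.ofReal_zero]
        rw [this, smul_zero]
      rw [hc0]
      simp [norm_nonneg, sq_nonneg]
    · have e1 := coeff_deriv_rel hL f hf hper hn
      have e2 := coeff_deriv_rel hL (deriv f) hf1 hperf1 hn
      have hnorm : ‖fourierCoeffOn hab F n‖
          ≤ (L / (2 * π)) * ((L / (2 * π)) * ‖fourierCoeffOn hab F2 n‖) := by
        rw [hF]
        calc ‖fourierCoeffOn hab (fun x => ((f x : ℝ) : ℂ)) n‖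
            = ‖(L:ℂ) / (2 * π * Complex.I * n)‖ *
              ‖fourierCoeffOn hab (fun x => ((deriv f x : ℝ) : ℂ)) n‖ := by
              rw [e1, norm_mul]
          _ ≤ (L / (2 * π)) * ‖fourierCoeffOn hab (fun x => ((deriv f x : ℝ) : ℂ)) n‖ := by
              apply mul_le_mul_of_nonneg_right (norm_coeff_factor hL hn) (norm_nonneg _)
          _ ≤ (L / (2 * π)) * ((L / (2 * π)) * ‖fourierCoeffOn hab F2 n‖) := by
              apply mul_le_mul_of_nonneg_left _ (by positivity)
              rw [e2, norm_mul, hF2]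
              exact mul_le_mul_of_nonneg_right (norm_coeff_factor hL hn) (norm_nonneg _)
      have hpos : (0:ℝ) < 2 * π / L := by positivity
      have h4 : (2 * π / L) ^ 4 * ‖fourierCoeffOn hab F n‖ ^ 2
          ≤ (2 * π / L) ^ 4 * ((L / (2 * π)) * ((L / (2 * π)) * ‖fourierCoeffOn hab F2 n‖)) ^ 2 := by
        apply mul_le_mul_of_nonneg_left _ (by positivity)
        exact pow_le_pow_left₀ (norm_nonneg _) hnorm 2
      refine h4.trans (le_of_eq ?_)
      have hpi : (π:ℝ) ≠ 0 := Real.pi_ne_zero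
      field_simp
  -- Parseval for F and F2
  obtain ⟨sF, pF⟩ := parseval_periodic hL F (Complex.continuous_ofReal.comp hf.continuous)
    (fun x => by simp [hF, hper x])
  obtain ⟨sF2, pF2⟩ := parseval_periodic hL F2 (Complex.continuous_ofReal.comp hf2.continuous)
    (fun x => by simp [hF2, hperf2 x])
  have hnormF : ∫ x in (0:ℝ)..L, ‖F x‖ ^ 2 = ∫ x in (0:ℝ)..L, f x ^ 2 := by
    apply intervalIntegral.integral_congr
    intro x _
    simp [hF, Complex.norm_real, sq_abs]
  have hnormF2 : ∫ x in (0:ℝ)..L, ‖F2 x‖ ^ 2 = ∫ x in (0:ℝ)..L, (deriv (deriv f) x) ^ 2 := by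
    apply intervalIntegral.integral_congr
    intro x _
    simp [hF2, Complex.norm_real, sq_abs]
  rw [← hnormF, ← hnormF2, pF, pF2]
  rw [show (2 * π / L) ^ 4 * (L * ∑' n : ℤ, ‖fourierCoeffOn hab F n‖ ^ 2)
      = L * ∑' n : ℤ, (2 * π / L) ^ 4 * ‖fourierCoeffOn hab F n‖ ^ 2 by
    rw [tsum_mul_left]; ring]
  exact mul_le_mul_of_nonneg_left (Summable.tsum_le_tsum hcomp (sF.mul_left _) sF2) hL.le
lemma ibp2 {L : ℝ} (hL : 0 < L) (φ ψ : ℝ → ℝ) (hφ : ContDiff ℝ (⊤ : ℕ∞) φ) (hψ : ContDiff ℝ (⊤ : ℕ∞) ψ)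
    (hperφ : ∀ x, φ (x + L) = φ x) (hperψ : ∀ x, ψ (x + L) = ψ x) :
    ∫ x in (0:ℝ)..L, φ x * deriv (deriv ψ) x
      = ∫ x in (0:ℝ)..L, deriv (deriv φ) x * ψ x := by
  have hφ1 : ContDiff ℝ (⊤ : ℕ∞) (deriv φ) := contDiff_deriv1 hφ
  have hψ1 : ContDiff ℝ (⊤ : ℕ∞) (deriv ψ) := contDiff_deriv1 hψ
  have hφ2 : ContDiff ℝ (⊤ : ℕ∞) (deriv (deriv φ)) := contDiff_deriv1 hφ1
  have hψ2 : ContDiff ℝ (⊤ : ℕ∞) (deriv (deriv ψ)) := contDiff_deriv1 hψ1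
  have e0 : ∀ (g : ℝ → ℝ), ContDiff ℝ (⊤ : ℕ∞) g → ∀ x ∈ Set.uIcc (0:ℝ) L,
      HasDerivAt g (deriv g x) x := fun g hg x _ => (hg.differentiable (by simp) x).hasDerivAt
  have A := intervalIntegral.integral_mul_deriv_eq_deriv_mul
    (u := φ) (u' := deriv φ) (v := deriv ψ) (v' := deriv (deriv ψ))
    (e0 φ hφ) (e0 (deriv ψ) hψ1)
    (hφ1.continuous.intervalIntegrable _ _) (hψ2.continuous.intervalIntegrable _ _)
  have B := intervalIntegral.integral_mul_deriv_eq_deriv_mul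
    (u := deriv φ) (u' := deriv (deriv φ)) (v := ψ) (v' := deriv ψ)
    (e0 (deriv φ) hφ1) (e0 ψ hψ) (hφ2.continuous.intervalIntegrable _ _)
    (hψ1.continuous.intervalIntegrable _ _)
  have bφ : φ L = φ 0 := by simpa using hperφ 0
  have bψ : ψ L = ψ 0 := by simpa using hperψ 0
  have bφ1 : deriv φ L = deriv φ 0 := by simpa using periodic_deriv1 hφ hperφ 0
  have bψ1 : deriv ψ L = deriv ψ 0 := by simpa using periodic_deriv1 hψ hperψ 0
  have C : ∫ x in (0:ℝ)..L, deriv φ x * deriv ψ x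
      = - ∫ x in (0:ℝ)..L, deriv (deriv φ) x * ψ x := by
    rw [B, bφ1, bψ]; ring
  rw [A, bφ, bψ1, C]; ring


lemma slice_contDiff {G : ℝ × ℝ → ℝ} (hG : ContDiff ℝ (⊤ : ℕ∞) G) (s : ℝ) :
    ContDiff ℝ (⊤ : ℕ∞) (fun x => G (s, x)) := hG.comp (contDiff_const.prodMk contDiff_id)

lemma deriv_slice2_fun {G : ℝ × ℝ → ℝ} (hG : ContDiff ℝ (⊤ : ℕ∞) G) (s : ℝ) :
    deriv (fun x => G (s, x)) = fun x => pd (0, 1) G (s, x) :=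
  funext fun x => deriv_slice2 hG s x

lemma deriv2_slice2 {G : ℝ × ℝ → ℝ} (hG : ContDiff ℝ (⊤ : ℕ∞) G) (s : ℝ) :
    deriv (deriv (fun x => G (s, x))) = fun x => pd (0, 1) (pd (0, 1) G) (s, x) := by
  rw [deriv_slice2_fun hG s, deriv_slice2_fun (pd_contDiff hG _) s]

lemma pd_neg {G : ℝ × ℝ → ℝ} (v : ℝ × ℝ) :
    pd v (fun p => -(G p)) = fun p => -(pd v G p) := by
  funext p; simp [pd, fderiv_neg]

/-- exponential decay in L² of the time derivative of a smooth
solution of the Metropolis crystal-surface PDE, with rate λ = (2π/L)⁴. -/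
theorem time_derivative_exponential_decay
    (L : ℝ) (hL : 0 < L)
    (h : ℝ → ℝ → ℝ)
    (hsmooth : ContDiff ℝ (⊤ : ℕ∞) (fun p : ℝ × ℝ => h p.1 p.2))
    (hper : ∀ t x, h t (x + L) = h t x)
    (hpde : ∀ t x, 0 ≤ t →
      deriv (fun s => h s x) t
        = - deriv (deriv (fun y => Real.sinh (deriv (deriv (h t)) y))) x) :
    ∀ t, 0 ≤ t →
      Real.sqrt (∫ x in (0:ℝ)..L, (deriv (fun s => h s x) t) ^ 2)
        ≤ Real.exp (-(2 * Real.pi / L) ^ 4 * t)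
            * Real.sqrt (∫ x in (0:ℝ)..L, (deriv (fun s => h s x) 0) ^ 2) := by
  have hH : ContDiff ℝ (⊤ : ℕ∞) (fun p : ℝ × ℝ => h p.1 p.2) := hsmooth
  set H : ℝ × ℝ → ℝ := fun p => h p.1 p.2 with hHdef
  set U : ℝ × ℝ → ℝ := pd (1, 0) H with hUdef
  have hU : ContDiff ℝ (⊤ : ℕ∞) U := pd_contDiff hH _
  set W : ℝ × ℝ → ℝ := pd (0, 1) (pd (0, 1) H) with hWdef
  have hW : ContDiff ℝ (⊤ : ℕ∞) W := pd_contDiff (pd_contDiff hH _) _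
  set S : ℝ × ℝ → ℝ := fun p => Real.sinh (W p) with hSdef
  have hS : ContDiff ℝ (⊤ : ℕ∞) S := Real.contDiff_sinh.comp hW
  set V : ℝ × ℝ → ℝ := fun p => -(pd (0, 1) (pd (0, 1) S) p) with hVdef
  have hV : ContDiff ℝ (⊤ : ℕ∞) V := (pd_contDiff (pd_contDiff hS _) _).neg
  set K : ℝ × ℝ → ℝ := fun p => Real.cosh (W p) * pd (0, 1) (pd (0, 1) U) p with hKdef
  have hK : ContDiff ℝ (⊤ : ℕ∞) K :=
    (Real.contDiff_cosh.comp hW).mul (pd_contDiff (pd_contDiff hU _) _)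
  -- rewrite of the goal integrand
  have hgoal : ∀ (τ y : ℝ), deriv (fun s => h s y) τ = U (τ, y) :=
    fun τ y => deriv_slice1 hH τ y
  -- periodicity facts
  have hperH : ∀ p : ℝ × ℝ, H (p + (0, L)) = H p := by
    rintro ⟨a, b⟩
    show h (a + 0) (b + L) = h a b
    rw [add_zero, hper]
  have hperU : ∀ p, U (p + (0, L)) = U p := pd_periodic hH hperH _
  have hperU2 : ∀ p, pd (0, 1) (pd (0, 1) U) (p + (0, L)) = pd (0, 1) (pd (0, 1) U) p :=
    pd_periodic (pd_contDiff hU _) (pd_periodic hU hperU _) _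
  have hperW : ∀ p, W (p + (0, L)) = W p :=
    pd_periodic (pd_contDiff hH _) (pd_periodic hH hperH _) _
  have hperS : ∀ p, S (p + (0, L)) = S p := fun p => by
    simp only [hSdef, hperW p]
  have hperSd : ∀ p, pd (0, 1) S (p + (0, L)) = pd (0, 1) S p := pd_periodic hS hperS _
  have hperK : ∀ p, K (p + (0, L)) = K p := fun p => by
    simp only [hKdef, hperW p, hperU2 p]
  -- PDE in pd form
  have hpde' : ∀ s x, 0 ≤ s → U (s, x) = V (s, x) := by
    intro s x hs
    have e2 : deriv (deriv (h s)) = fun y => W (s, y) := by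
      have e1 : deriv (h s) = fun y => pd (0, 1) H (s, y) :=
        funext fun y => deriv_slice2 hH s y
      rw [e1]
      exact funext fun y => deriv_slice2 (pd_contDiff hH _) s y
    have e3 : (fun y => Real.sinh (deriv (deriv (h s)) y)) = fun y => S (s, y) := by
      rw [e2]
    have hp := hpde s x hs
    rw [e3] at hp
    rw [← hgoal s x, hp, hVdef]
    show -(deriv (deriv fun y => S (s, y)) x) = -(pd (0, 1) (pd (0, 1) S) (s, x))
    congr 1
    rw [show (deriv fun y => S (s, y)) = fun y => pd (0, 1) S (s, y) from
      deriv_slice2_fun hS s]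
    exact deriv_slice2 (pd_contDiff hS _) s x
  -- mean zero at each time
  have hmean : ∀ s : ℝ, 0 ≤ s → ∫ x in (0:ℝ)..L, U (s, x) = 0 := by
    intro s hs
    have e : ∀ x, U (s, x) = -(pd (0, 1) (pd (0, 1) S) (s, x)) := by
      intro x; rw [hpde' s x hs, hVdef]
    rw [intervalIntegral.integral_congr (g := fun x => -(pd (0, 1) (pd (0, 1) S) (s, x)))
      (fun x _ => e x)]
    rw [intervalIntegral.integral_neg, neg_eq_zero]
    have hftc := intervalIntegral.integral_eq_sub_of_hasDerivAt
      (f := fun y => pd (0, 1) S (s, y)) (f' := fun y => pd (0, 1) (pd (0, 1) S) (s, y))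
      (a := 0) (b := L)
      (fun x _ => hasDerivAt_slice2 (pd_contDiff hS (0, 1)) s x)
      (((pd_contDiff (pd_contDiff hS _) _).continuous.comp
        (continuous_const.prodMk continuous_id)).intervalIntegrable _ _)
    rw [hftc]
    have hb := hperSd (s, 0)
    simp only [Prod.mk_add_mk, add_zero, zero_add] at hb
    show pd (0, 1) S (s, L) - pd (0, 1) S (s, 0) = 0
    rw [hb, sub_self]
  -- energy and its derivative
  set lam : ℝ := (2 * π / L) ^ 4 with hlam
  set F : ℝ → ℝ := fun τ => ∫ x in (0:ℝ)..L, (U (τ, x)) ^ 2 with hFdef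
  have hFd : ∀ τ : ℝ, HasDerivAt F
      (∫ x in (0:ℝ)..L, 2 * U (τ, x) * pd (1, 0) U (τ, x)) τ := by
    intro τ
    have hcontD : Continuous fun p : ℝ × ℝ => 2 * U p * pd (1, 0) U p :=
      (continuous_const.mul hU.continuous).mul (pd_contDiff hU _).continuous
    obtain ⟨C, hC⟩ := ((isCompact_Icc (a := τ - 1) (b := τ + 1)).prod
      (isCompact_Icc (a := min 0 L) (b := max 0 L))).exists_bound_of_continuousOn
      hcontD.continuousOn
    have key := intervalIntegral.hasDerivAt_integral_of_dominated_loc_of_deriv_le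
      (F := fun σ x => (U (σ, x)) ^ 2) (F' := fun σ x => 2 * U (σ, x) * pd (1, 0) U (σ, x))
      (x₀ := τ) (a := 0) (b := L) (bound := fun _ => C) (s := Metric.ball τ 1) (μ := MeasureTheory.volume) (Metric.ball_mem_nhds τ one_pos)
      (Filter.Eventually.of_forall fun σ =>
        ((hU.continuous.comp (continuous_const.prodMk continuous_id)).pow 2
          |>.aestronglyMeasurable))
      (((hU.continuous.comp (continuous_const.prodMk continuous_id)).pow 2
          ).intervalIntegrable _ _)
      ((hcontD.comp (continuous_const.prodMk continuous_id)).aestronglyMeasurable)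
      ?_ intervalIntegrable_const ?_
    · exact key.2
    · refine MeasureTheory.ae_of_all _ fun x hx σ hσ => ?_
      have hx' : x ∈ Set.Icc (min 0 L) (max 0 L) := Ioc_subset_Icc_self hx
      have hσ' : σ ∈ Set.Icc (τ - 1) (τ + 1) := by
        have := abs_lt.1 (by simpa [Real.dist_eq] using hσ)
        constructor <;> linarith
      exact hC (σ, x) (Set.mk_mem_prod hσ' hx')
    · refine MeasureTheory.ae_of_all _ fun x hx σ hσ => ?_
      simpa [mul_assoc, mul_comm, mul_left_comm] using (hasDerivAt_slice1 hU σ x).fun_pow 2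
  -- key differential inequality
  have key : ∀ s : ℝ, 0 < s →
      (∫ x in (0:ℝ)..L, 2 * U (s, x) * pd (1, 0) U (s, x)) ≤ -2 * lam * F s := by
    intro s hs
    have hUk : ∀ x, pd (1, 0) U (s, x) = -(pd (0, 1) (pd (0, 1) K) (s, x)) := by
      intro x
      have h1 : pd (1, 0) U (s, x) = pd (1, 0) V (s, x) := by
        rw [← deriv_slice1 hU s x, ← deriv_slice1 hV s x]
        apply Filter.EventuallyEq.deriv_eq
        filter_upwards [eventually_gt_nhds hs] with σ hσ
        exact hpde' σ x hσ.le
      have h3 : pd (1, 0) S = K := by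
        funext p
        show pd (1, 0) (fun q => Real.sinh (W q)) p = Real.cosh (W p) * pd (0, 1) (pd (0, 1) U) p
        rw [pd_sinh hW _ p]
        congr 1
        have c3 : pd (1, 0) W = pd (0, 1) (pd (0, 1) U) := by
          rw [hWdef, hUdef]
          rw [pd_comm (pd_contDiff hH _) (1, 0) (0, 1)]
          rw [pd_comm hH (1, 0) (0, 1)]
        rw [c3]
      have h2 : pd (1, 0) V = fun p => -(pd (0, 1) (pd (0, 1) K) p) := by
        have e0 : pd (1, 0) V = fun p => -(pd (1, 0) (pd (0, 1) (pd (0, 1) S)) p) := by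
          rw [hVdef]
          exact pd_neg _
        rw [e0, pd_comm (pd_contDiff hS _) (1, 0) (0, 1),
          pd_comm hS (1, 0) (0, 1), h3]
      rw [h1, h2]
    -- slice functions
    set φ : ℝ → ℝ := fun x => U (s, x) with hφdef
    set ψ : ℝ → ℝ := fun x => K (s, x) with hψdef
    have hφc : ContDiff ℝ (⊤ : ℕ∞) φ := slice_contDiff hU s
    have hψc : ContDiff ℝ (⊤ : ℕ∞) ψ := slice_contDiff hK s
    have hφper : ∀ x, φ (x + L) = φ x := by
      intro x
      have := hperU (s, x)
      simpa [Prod.mk_add_mk, add_zero, zero_add] using this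
    have hψper : ∀ x, ψ (x + L) = ψ x := by
      intro x
      have := hperK (s, x)
      simpa [Prod.mk_add_mk, add_zero, zero_add] using this
    have hd2ψ : deriv (deriv ψ) = fun x => pd (0, 1) (pd (0, 1) K) (s, x) :=
      deriv2_slice2 hK s
    have hd2φ : deriv (deriv φ) = fun x => pd (0, 1) (pd (0, 1) U) (s, x) :=
      deriv2_slice2 hU s
    have calc1 : (∫ x in (0:ℝ)..L, 2 * U (s, x) * pd (1, 0) U (s, x))
        = -2 * ∫ x in (0:ℝ)..L, φ x * deriv (deriv ψ) x := by
      rw [hd2ψ, ← intervalIntegral.integral_const_mul]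
      apply intervalIntegral.integral_congr
      intro x _
      show 2 * U (s, x) * pd (1, 0) U (s, x)
        = -2 * (φ x * pd (0, 1) (pd (0, 1) K) (s, x))
      rw [hUk x]
      show 2 * U (s, x) * -(pd (0, 1) (pd (0, 1) K) (s, x))
        = -2 * (U (s, x) * pd (0, 1) (pd (0, 1) K) (s, x))
      ring
    rw [calc1, ibp2 hL φ ψ hφc hψc hφper hψper]
    have calc2 : ∫ x in (0:ℝ)..L, deriv (deriv φ) x * ψ x
        = ∫ x in (0:ℝ)..L, Real.cosh (W (s, x)) * (deriv (deriv φ) x) ^ 2 := by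
      apply intervalIntegral.integral_congr
      intro x _
      show deriv (deriv φ) x * (Real.cosh (W (s, x)) * pd (0, 1) (pd (0, 1) U) (s, x))
        = Real.cosh (W (s, x)) * (deriv (deriv φ) x) ^ 2
      rw [hd2φ]
      ring
    rw [calc2]
    have mono1 : ∫ x in (0:ℝ)..L, (deriv (deriv φ) x) ^ 2
        ≤ ∫ x in (0:ℝ)..L, Real.cosh (W (s, x)) * (deriv (deriv φ) x) ^ 2 := by
      apply intervalIntegral.integral_mono_on hL.le
      · exact ((contDiff_deriv1 (contDiff_deriv1 hφc)).continuous.pow 2).intervalIntegrable _ _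
      · exact (((Real.continuous_cosh.comp (hW.continuous.comp
          (continuous_const.prodMk continuous_id))).mul
          ((contDiff_deriv1 (contDiff_deriv1 hφc)).continuous.pow 2))).intervalIntegrable _ _
      · intro x _
        nlinarith [Real.one_le_cosh (W (s, x)), sq_nonneg (deriv (deriv φ) x)]
    have wir := wirtinger hL φ hφc hφper (by rw [hφdef]; exact hmean s hs.le)
    have hFs : F s = ∫ x in (0:ℝ)..L, φ x ^ 2 := by rw [hFdef]
    rw [hlam, hFs]
    nlinarith [wir, mono1]
  -- Gronwall via monotonicity
  set G : ℝ → ℝ := fun τ => Real.exp (2 * lam * τ) * F τ with hGdef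
  have hGd : ∀ τ, HasDerivAt G
      (Real.exp (2 * lam * τ) * (2 * lam) * F τ
        + Real.exp (2 * lam * τ) * (∫ x in (0:ℝ)..L, 2 * U (τ, x) * pd (1, 0) U (τ, x))) τ := by
    intro τ
    have he : HasDerivAt (fun τ => Real.exp (2 * lam * τ))
        (Real.exp (2 * lam * τ) * (2 * lam)) τ := by
      simpa using ((hasDerivAt_id τ).const_mul (2 * lam)).exp
    exact he.mul (hFd τ)
  have hGcont : Continuous G := by
    refine continuous_iff_continuousAt.mpr fun τ => (hGd τ).continuousAt
  have hanti : AntitoneOn G (Ici 0) := by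
    apply antitoneOn_of_deriv_nonpos (convex_Ici 0) hGcont.continuousOn
    · intro τ _
      exact (hGd τ).differentiableAt.differentiableWithinAt
    · intro τ hτ
      rw [interior_Ici] at hτ
      rw [(hGd τ).deriv]
      have hk := key τ hτ
      nlinarith [Real.exp_pos (2 * lam * τ),
        mul_le_mul_of_nonneg_left hk (Real.exp_pos (2 * lam * τ)).le]
  intro t ht
  simp only [hgoal]
  have hGle : G t ≤ G 0 := hanti (mem_Ici.mpr le_rfl) (mem_Ici.mpr ht) ht
  have h1 : Real.exp (2 * lam * t) * F t ≤ F 0 := by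
    have := hGle
    rw [hGdef] at this
    simpa using this
  have hF0 : 0 ≤ F 0 :=
    intervalIntegral.integral_nonneg hL.le fun x _ => sq_nonneg _
  have hid : Real.exp (-(lam * t)) ^ 2 * Real.exp (2 * lam * t) = 1 := by
    rw [sq, ← Real.exp_add, ← Real.exp_add,
      show -(lam * t) + -(lam * t) + 2 * lam * t = 0 by ring, Real.exp_zero]
  have hFt : F t ≤ Real.exp (-(lam * t)) ^ 2 * F 0 := by
    have h2 : Real.exp (-(lam * t)) ^ 2 * (Real.exp (2 * lam * t) * F t) = F t := by
      rw [← mul_assoc, hid, one_mul]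
    have h3 := mul_le_mul_of_nonneg_left h1 (sq_nonneg (Real.exp (-(lam * t))))
    linarith [h2 ▸ h3]
  calc Real.sqrt (F t) ≤ Real.sqrt (Real.exp (-(lam * t)) ^ 2 * F 0) :=
        Real.sqrt_le_sqrt hFt
    _ = Real.exp (-(lam * t)) * Real.sqrt (F 0) := by
        rw [Real.sqrt_mul (sq_nonneg _), Real.sqrt_sq (Real.exp_nonneg _)]
    _ = Real.exp (-lam * t) * Real.sqrt (F 0) := by rw [neg_mul]
end
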